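/- arXiv:1409.3118 — 2 statements merged into one kernel-verified Lean document; each statement's English description precedes it below -/
import Mathlib

section
/- With C* as above, for every measurable f with finite e_log Luxembourg norm: ∫ |f(x)|·ln⁺|f(x)| dx ≤ ‖f‖_{e_log}·(1 + 2C*·ln⁺‖f‖_{e_log}). -/
open MeasureTheory Real ENNReal

noncomputable section

abbrev E (d : ℕ) := EuclideanSpace ℝ (Fin d)

def elog (t : ℝ) : ℝ := (1 + |t|) * Real.log (1 + |t|)

def lnpos (x : ℝ) : ℝ := max 0 (Real.log |x|)

def luxNorm {d : ℕ} (e : ℝ → ℝ) (f : E d → ℝ) : ℝ :=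
  sInf {c : ℝ | 0 < c ∧ ∫⁻ x, ENNReal.ofReal (e (f x / c)) ≤ 1}

open Filter Topology

/-! Since `elog t` dominates both `|t|` and `|t| log⁺ |t|`, splitting
`log⁺ |f| ≤ log⁺ |f / c| + log⁺ c` gives `|f| log⁺ |f| ≤ c (1 + log⁺ c) elog (f / c)` pointwise,
so every admissible `c` in the Luxemburg infimum bounds the integral by `c (1 + log⁺ c)`.
Every `c` above the norm is admissible, so letting `c` decrease to the norm `N` bounds the
integral by `N (1 + log⁺ N)`, and `1 ≤ 2 C*`. -/

lemma lnpos_eq_posLog : lnpos = Real.posLog := by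
  funext x
  rw [lnpos, posLog_apply, log_abs]

lemma abs_le_elog (t : ℝ) : |t| ≤ elog t := by
  have hpos : 0 < 1 + |t| := by positivity
  calc |t| = (1 + |t|) * (1 - (1 + |t|)⁻¹) := by field_simp; ring
    _ ≤ elog t := mul_le_mul_of_nonneg_left (Real.one_sub_inv_le_log_of_pos hpos) hpos.le

lemma abs_mul_posLog_le_elog (t : ℝ) : |t| * log⁺ t ≤ elog t := by
  rw [← posLog_abs, posLog_eq_log_max_one (abs_nonneg t)]
  have hlog : Real.log (max 1 |t|) ≤ Real.log (1 + |t|) :=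
    log_le_log (by positivity) (max_le (by simp) (by simp))
  exact mul_le_mul (by simp) hlog (log_nonneg (le_max_left _ _)) (by positivity)

lemma elog_le_elog {u v : ℝ} (h : |u| ≤ |v|) : elog u ≤ elog v :=
  mul_le_mul (by linarith) (log_le_log (by positivity) (by linarith))
    (log_nonneg (by simp)) (by positivity)

lemma abs_mul_posLog_le_mul_elog_div {c : ℝ} (hc : 0 < c) (x : ℝ) :
    |x| * log⁺ x ≤ c * (1 + log⁺ c) * elog (x / c) := by
  set t := x / c
  have hx : x = t * c := (div_mul_cancel₀ x hc.ne').symm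
  calc |x| * log⁺ x = c * |t| * log⁺ (t * c) := by rw [hx, abs_mul, abs_of_pos hc]; ring
    _ ≤ c * |t| * (log⁺ t + log⁺ c) := by gcongr; exact posLog_mul
    _ = c * (|t| * log⁺ t + log⁺ c * |t|) := by ring
    _ ≤ c * (elog t + log⁺ c * elog t) := by
        gcongr
        · exact abs_mul_posLog_le_elog t
        · exact posLog_nonneg
        · exact abs_le_elog t
    _ = c * (1 + log⁺ c) * elog t := by ring

theorem lintegral_abs_mul_posLog_le {α : Type*} [MeasurableSpace α] {μ : Measure α}
    {f : α → ℝ} {c : ℝ} (hc : 0 < c) (hc₁ : ∫⁻ x, ENNReal.ofReal (elog (f x / c)) ∂μ ≤ 1) :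
    ∫⁻ x, ENNReal.ofReal (|f x| * log⁺ (f x)) ∂μ ≤ ENNReal.ofReal (c * (1 + log⁺ c)) := by
  have hK : 0 ≤ c * (1 + log⁺ c) := by have := posLog_nonneg (x := c); positivity
  calc ∫⁻ x, ENNReal.ofReal (|f x| * log⁺ (f x)) ∂μ
      ≤ ∫⁻ x, ENNReal.ofReal (c * (1 + log⁺ c)) * ENNReal.ofReal (elog (f x / c)) ∂μ :=
        lintegral_mono fun x => by
          rw [← ENNReal.ofReal_mul hK]
          exact ENNReal.ofReal_le_ofReal (abs_mul_posLog_le_mul_elog_div hc (f x))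
    _ = ENNReal.ofReal (c * (1 + log⁺ c)) * ∫⁻ x, ENNReal.ofReal (elog (f x / c)) ∂μ :=
        lintegral_const_mul' _ _ ofReal_ne_top
    _ ≤ ENNReal.ofReal (c * (1 + log⁺ c)) := mul_le_of_le_one_right' hc₁

lemma luxNorm_nonneg {d : ℕ} (e : ℝ → ℝ) (f : E d → ℝ) : 0 ≤ luxNorm e f :=
  Real.sInf_nonneg fun _ hc => hc.1.le

lemma lintegral_elog_div_le_one_of_luxNorm_lt {d : ℕ} {f : E d → ℝ}
    (hfin : ∃ c : ℝ, 0 < c ∧ ∫⁻ x, ENNReal.ofReal (elog (f x / c)) ≤ 1) {c : ℝ}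
    (hc : luxNorm elog f < c) : 0 < c ∧ ∫⁻ x, ENNReal.ofReal (elog (f x / c)) ≤ 1 := by
  obtain ⟨s, ⟨hs, hs₁⟩, hsc⟩ := exists_lt_of_csInf_lt hfin hc
  have hc₀ : 0 < c := hs.trans hsc
  refine ⟨hc₀, le_trans (lintegral_mono fun x => ENNReal.ofReal_le_ofReal (elog_le_elog ?_)) hs₁⟩
  rw [abs_div, abs_div, abs_of_pos hc₀, abs_of_pos hs]
  gcongr

theorem LlogL_le_luxNorm_elog_general (d : ℕ) (εs : ℝ) (hεs : 0 < εs)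
    (f : E d → ℝ)
    (hfin : ∃ c : ℝ, 0 < c ∧ ∫⁻ x, ENNReal.ofReal (elog (f x / c)) ≤ 1) :
    ∫⁻ x, ENNReal.ofReal (|f x| * lnpos (f x)) ≤
      ENNReal.ofReal (luxNorm elog f *
        (1 + 2 * (2 + 1 / Real.log (1 + εs)) * lnpos (luxNorm elog f))) := by
  set N := luxNorm elog f
  have hC : 1 ≤ 2 * (2 + 1 / Real.log (1 + εs)) := by
    have := log_pos (by linarith : 1 < 1 + εs)
    have : 0 < 1 / Real.log (1 + εs) := by positivity
    linarith
  have hlim : Tendsto (fun c => ENNReal.ofReal (c * (1 + log⁺ c))) (𝓝[>] N)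
      (𝓝 (ENNReal.ofReal (N * (1 + log⁺ N)))) :=
    (ENNReal.continuous_ofReal.comp (by fun_prop)).continuousAt.tendsto.mono_left
      nhdsWithin_le_nhds
  rw [lnpos_eq_posLog]
  calc ∫⁻ x, ENNReal.ofReal (|f x| * log⁺ (f x))
      ≤ ENNReal.ofReal (N * (1 + log⁺ N)) :=
        ge_of_tendsto hlim <| eventually_nhdsWithin_of_forall fun c hc =>
          have ⟨hc₀, hc₁⟩ := lintegral_elog_div_le_one_of_luxNorm_lt hfin hc
          lintegral_abs_mul_posLog_le hc₀ hc₁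
    _ ≤ _ := by
        have := posLog_nonneg (x := N)
        gcongr
        · exact luxNorm_nonneg elog f
        · nlinarith

/-- With `C* = 2 + 1/ln(1+ε*)` as in the L¹ bound, for every measurable `f` with finite
`e_log` Luxembourg norm: `∫ |f| ln⁺|f| ≤ ‖f‖_{e_log} (1 + 2C* ln⁺‖f‖_{e_log})`. -/
theorem LlogL_le_luxNorm_elog (d : ℕ) (εs : ℝ) (hεs : 0 < εs)
    (hεprop : ∀ t : ℝ, 0 < t → t ≤ εs → t ≤ 2 * Real.log (1 + t))
    (f : E d → ℝ) (hf : Measurable f)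
    (hfin : ∃ c : ℝ, 0 < c ∧ ∫⁻ x, ENNReal.ofReal (elog (f x / c)) ≤ 1) :
    ∫⁻ x, ENNReal.ofReal (|f x| * lnpos (f x)) ≤
      ENNReal.ofReal (luxNorm elog f *
        (1 + 2 * (2 + 1 / Real.log (1 + εs)) * lnpos (luxNorm elog f))) :=
  LlogL_le_luxNorm_elog_general d εs hεs f hfin
end
end

section
/- Let e be a Young function with s ↦ e(s)/s nondecreasing and let ρ_{n,p}(z) = (1 + 2^n|z|)^{-p} on ℝ^d with p > d. Then there is a constant C_p depending only on p and d such that ‖ρ_{n,p}‖_e ≤ 1/e⁻¹(2^{nd}/C_p), where e⁻¹(a) = sup{c : e(c) ≤ a} and ‖·‖_e is the Luxembourg norm. -/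
open MeasureTheory Real ENNReal

noncomputable section

def einv (e : ℝ → ℝ) (a : ℝ) : ℝ := sSup {c : ℝ | e c ≤ a}

/-! Put `a = 2^{nd}/C` and `m = e⁻¹(a)`; continuity of `e` and the growth `e(c) ≥ c e(1)` make
the supremum attained, so `e(m) ≤ a` and `m > 0`. Since `e(s)/s` is nondecreasing and
`0 < ρ_{n,p} ≤ 1`, `e(ρ_{n,p} m) ≤ ρ_{n,p} e(m) ≤ a ρ_{n,p}`, hence the Luxemburg modular of
`ρ_{n,p}` at scale `1/m` is at most `a ∫ ρ_{n,p} = a 2^{-nd} K`, where `K = ∫ (1 + |z|)^{-p}` is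
finite because `p > d`. Any `C ≥ K` makes this at most `1`. -/

section YoungFunction

variable {e : ℝ → ℝ}

theorem StrictConvexOn.apply_pos_of_even (hsc : StrictConvexOn ℝ Set.univ e)
    (heven : ∀ s, e (-s) = e s) (h0 : e 0 = 0) {x : ℝ} (hx : x ≠ 0) : 0 < e x := by
  have h := hsc.2 (Set.mem_univ (-x)) (Set.mem_univ x) (fun h => hx (by linarith))
    (by norm_num : (0 : ℝ) < 1 / 2) (by norm_num : (0 : ℝ) < 1 / 2) (by norm_num)
  simp only [smul_eq_mul] at h
  rw [show (1 : ℝ) / 2 * -x + 1 / 2 * x = 0 by ring, h0, heven] at h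
  linarith

variable (hmono : ∀ s t : ℝ, 0 < s → s ≤ t → e s / s ≤ e t / t)
include hmono

theorem apply_mul_le_mul_apply {t m : ℝ} (ht : 0 < t) (ht1 : t ≤ 1) (hm : 0 < m) :
    e (t * m) ≤ t * e m := by
  have h := hmono (t * m) m (mul_pos ht hm) (mul_le_of_le_one_left hm.le ht1)
  rw [div_le_div_iff₀ (mul_pos ht hm) hm] at h
  exact le_of_mul_le_mul_right (by linarith [show e m * (t * m) = t * e m * m by ring]) hm

theorem bddAbove_setOf_apply_le (he1 : 0 < e 1) (a : ℝ) : BddAbove {c | e c ≤ a} := by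
  refine ⟨max 1 (a / e 1), fun c hc => ?_⟩
  rcases le_or_gt c 1 with hc1 | hc1
  · exact le_max_of_le_left hc1
  · have hc0 : 0 < c := one_pos.trans hc1
    have h := apply_mul_le_mul_apply hmono (inv_pos.mpr hc0) (inv_le_one_of_one_le₀ hc1.le) hc0
    rw [inv_mul_cancel₀ hc0.ne', le_inv_mul_iff₀ hc0] at h
    exact le_max_of_le_right ((le_div_iff₀ he1).mpr (h.trans hc))

theorem lintegral_ofReal_apply_mul_le {X : Type*} [MeasurableSpace X] (μ : Measure X)
    {f : X → ℝ} (hf : ∀ x, 0 < f x ∧ f x ≤ 1) {m a : ℝ} (hm : 0 < m) (hem : e m ≤ a) :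
    ∫⁻ x, ENNReal.ofReal (e (f x * m)) ∂μ ≤ ENNReal.ofReal a * ∫⁻ x, ENNReal.ofReal (f x) ∂μ := by
  rw [← lintegral_const_mul' _ _ ofReal_ne_top]
  refine lintegral_mono fun x => ?_
  rw [← ofReal_mul' (hf x).1.le]
  refine ofReal_le_ofReal ((apply_mul_le_mul_apply hmono (hf x).1 (hf x).2 hm).trans ?_)
  nlinarith [(hf x).1]

end YoungFunction

section Einv

variable {e : ℝ → ℝ} {a : ℝ}

theorem apply_einv_le (hcont : Continuous e) (hbdd : BddAbove {c | e c ≤ a}) (h0 : e 0 ≤ a) :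
    e (einv e a) ≤ a :=
  (isClosed_le hcont continuous_const).csSup_mem ⟨0, h0⟩ hbdd

theorem einv_pos (hcont : Continuous e) (h0 : e 0 = 0) (ha : 0 < a)
    (hbdd : BddAbove {c | e c ≤ a}) : 0 < einv e a := by
  have hnear : ∀ᶠ x in nhdsWithin 0 (Set.Ioi 0), 0 < x ∧ e x < a :=
    (eventually_mem_nhdsWithin (a := (0 : ℝ)) (s := Set.Ioi 0)).and
      (nhdsWithin_le_nhds ((hcont.tendsto 0).eventually_lt_const (by rwa [h0])))
  obtain ⟨x, hx0, hxa⟩ := hnear.exists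
  exact hx0.trans_le (le_csSup hbdd hxa.le)

end Einv

theorem luxNorm_le_of_lintegral_le {d : ℕ} {e : ℝ → ℝ} {f : E d → ℝ} {c : ℝ} (hc : 0 < c)
    (h : ∫⁻ x, ENNReal.ofReal (e (f x / c)) ≤ 1) : luxNorm e f ≤ c :=
  csInf_le ⟨0, fun _ hc' => hc'.1.le⟩ ⟨hc, h⟩

theorem one_add_mul_norm_rpow_neg_mem_Ioc {F : Type*} [SeminormedAddCommGroup F] {r p : ℝ}
    (hr : 0 ≤ r) (hp : 0 ≤ p) (x : F) :
    0 < (1 + r * ‖x‖) ^ (-p) ∧ (1 + r * ‖x‖) ^ (-p) ≤ 1 := by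
  have hb : 1 ≤ 1 + r * ‖x‖ := le_add_of_nonneg_right (by positivity)
  exact ⟨rpow_pos_of_pos (by linarith) _, rpow_le_one_of_one_le_of_nonpos hb (neg_nonpos.mpr hp)⟩

section Scaling

variable {F : Type*} [NormedAddCommGroup F] [NormedSpace ℝ F] [MeasurableSpace F] [BorelSpace F]
  [FiniteDimensional ℝ F] (μ : Measure F) [μ.IsAddHaarMeasure]

theorem lintegral_comp_smul {g : F → ℝ≥0∞} (hg : Measurable g) {r : ℝ} (hr : r ≠ 0) :
    ∫⁻ x, g (r • x) ∂μ = ENNReal.ofReal |(r ^ Module.finrank ℝ F)⁻¹| * ∫⁻ x, g x ∂μ := by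
  rw [← lintegral_map hg (measurable_const_smul r), Measure.map_addHaar_smul μ hr,
    lintegral_smul_measure, smul_eq_mul]

theorem lintegral_one_add_mul_norm_rpow {r : ℝ} (hr : 0 < r) (p : ℝ) :
    ∫⁻ x, ENNReal.ofReal ((1 + r * ‖x‖) ^ (-p)) ∂μ =
      ENNReal.ofReal (r ^ Module.finrank ℝ F)⁻¹ * ∫⁻ x, ENNReal.ofReal ((1 + ‖x‖) ^ (-p)) ∂μ := by
  have hg : Measurable fun x : F => ENNReal.ofReal ((1 + ‖x‖) ^ (-p)) := by fun_prop
  have hnorm (x : F) : r * ‖x‖ = ‖r • x‖ := by rw [norm_smul, norm_of_nonneg hr.le]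
  simp_rw [hnorm, lintegral_comp_smul μ hg hr.ne', abs_of_pos (inv_pos.mpr (pow_pos hr _))]

end Scaling

/-- For `p > d` there is a constant `C_p` (depending only on `p` and `d`) such that for
every Young function `e` with `s ↦ e(s)/s` nondecreasing and every `n`,
`‖(1 + 2ⁿ|·|)^{-p}‖ₑ ≤ 1 / e⁻¹(2^{nd}/C_p)`. -/
theorem luxNorm_rho_le (d : ℕ) (p : ℝ) (hp : (d : ℝ) < p) :
    ∃ C : ℝ, 0 < C ∧ ∀ e : ℝ → ℝ,
      (∀ s, e (-s) = e s) →
      StrictConvexOn ℝ Set.univ e →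
      (∀ s, 0 ≤ e s) →
      e 0 = 0 →
      (∀ s t : ℝ, 0 < s → s ≤ t → e s / s ≤ e t / t) →
      ∀ n : ℕ,
        luxNorm e (fun z : E d => (1 + 2 ^ n * ‖z‖) ^ (-p)) ≤
          1 / einv e ((2 : ℝ) ^ (n * d) / C) := by
  set K := ∫⁻ x : E d, ENNReal.ofReal ((1 + ‖x‖) ^ (-p))
  have hK : K ≤ ENNReal.ofReal (max K.toReal 1) := by
    have hfin : K < ∞ := finite_integral_one_add_norm (by simpa using hp)
    exact (ofReal_toReal hfin.ne).symm.le.trans (ofReal_le_ofReal (le_max_left _ _))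
  refine ⟨max K.toReal 1, by positivity, fun e heven hsc _ h0 hmono n => ?_⟩
  set C := max K.toReal 1
  set a := (2 : ℝ) ^ (n * d) / C
  have ha : 0 < a := by positivity
  have hcont : Continuous e := continuousOn_univ.mp (hsc.convexOn.continuousOn isOpen_univ)
  have hbdd := bddAbove_setOf_apply_le hmono (hsc.apply_pos_of_even heven h0 one_ne_zero) a
  have hm := einv_pos hcont h0 ha hbdd
  have hρ := one_add_mul_norm_rpow_neg_mem_Ioc (F := E d) (pow_nonneg zero_le_two n)
    (d.cast_nonneg.trans hp.le)
  refine luxNorm_le_of_lintegral_le (one_div_pos.mpr hm) ?_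
  simp_rw [one_div, div_inv_eq_mul]
  calc _ ≤ ENNReal.ofReal a * ∫⁻ x : E d, ENNReal.ofReal ((1 + 2 ^ n * ‖x‖) ^ (-p)) :=
        lintegral_ofReal_apply_mul_le hmono volume hρ hm
          (apply_einv_le hcont hbdd (h0.trans_le ha.le))
    _ = ENNReal.ofReal (1 / C) * K := by
        rw [lintegral_one_add_mul_norm_rpow volume (by positivity), ← mul_assoc,
          ← ofReal_mul ha.le, finrank_euclideanSpace_fin, ← pow_mul]
        congr 2
        simp only [a]
        field_simp
    _ ≤ ENNReal.ofReal (1 / C) * ENNReal.ofReal C := by gcongr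
    _ = 1 := by rw [← ofReal_mul (by positivity), one_div_mul_cancel (by positivity), ofReal_one]
end
end
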